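/- arXiv:2206.05888 — 10 statements merged into one kernel-verified Lean document; each statement's English description precedes it below -/
import Mathlib

section
/- Suppose x, u : ℝ → ℝ^d are differentiable curves such that for every t ∈ ℝ one has x'(t) = f(x(t), u(t)), the linear map J_u(x(t), u(t)) is invertible, and the input dynamics u'(t) = (J_u(x(t), u(t)))⁻¹ ( h*(x(t), u(t)) − J_x(x(t), u(t)) (f(x(t), u(t))) ) holds, where h* : ℝ^d × ℝ^d → ℝ^d is a given function. Then the map t ↦ h(x(t), u(t)) is differentiable and its derivative satisfies d/dt [h(x(t), u(t))] = h*(x(t), u(t)) for every t ∈ ℝ. -/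
open ContinuousLinearMap

/-- **Implicit Control input dynamics imposes the desired dynamics on `h`.**
If `x' = f(x,u)` and `u' = J_u⁻¹ (h* − J_x f)`, with `J_x, J_u` the partial Jacobians of
`h(x,u) = f(x,u) − f*(x)` and `J_u` invertible along the trajectory, then
`d/dt [h(x(t),u(t))] = h*(x(t),u(t))` for every `t`. -/
theorem implicit_control_imposes_desired_dynamics
    (d : ℕ) (hd : 0 < d)
    (f : EuclideanSpace ℝ (Fin d) × EuclideanSpace ℝ (Fin d) → EuclideanSpace ℝ (Fin d))
    (fstar : EuclideanSpace ℝ (Fin d) → EuclideanSpace ℝ (Fin d))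
    (hf : ContDiff ℝ 1 f) (hfstar : ContDiff ℝ 1 fstar)
    (h : EuclideanSpace ℝ (Fin d) × EuclideanSpace ℝ (Fin d) → EuclideanSpace ℝ (Fin d))
    (hdef : ∀ p, h p = f p - fstar p.1)
    (Jx Ju : EuclideanSpace ℝ (Fin d) × EuclideanSpace ℝ (Fin d) →
      EuclideanSpace ℝ (Fin d) →L[ℝ] EuclideanSpace ℝ (Fin d))
    (hJx : ∀ p, Jx p = fderiv ℝ (fun y => h (y, p.2)) p.1)
    (hJu : ∀ p, Ju p = fderiv ℝ (fun v => h (p.1, v)) p.2)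
    (hstar : EuclideanSpace ℝ (Fin d) × EuclideanSpace ℝ (Fin d) → EuclideanSpace ℝ (Fin d))
    (x u : ℝ → EuclideanSpace ℝ (Fin d))
    (hx : Differentiable ℝ x) (hu : Differentiable ℝ u)
    (hxdyn : ∀ t, deriv x t = f (x t, u t))
    (Jinv : ℝ → EuclideanSpace ℝ (Fin d) →L[ℝ] EuclideanSpace ℝ (Fin d))
    (hinv₁ : ∀ t, (Ju (x t, u t)).comp (Jinv t) = ContinuousLinearMap.id ℝ _)
    (hinv₂ : ∀ t, (Jinv t).comp (Ju (x t, u t)) = ContinuousLinearMap.id ℝ _)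
    (hudyn : ∀ t, deriv u t =
      Jinv t (hstar (x t, u t) - Jx (x t, u t) (f (x t, u t)))) :
    ∀ t, HasDerivAt (fun s => h (x s, u s)) (hstar (x t, u t)) t := by

  have hh : ContDiff ℝ 1 h := by
    have : h = fun p => f p - fstar p.1 := funext hdef
    rw [this]
    exact hf.sub (hfstar.comp contDiff_fst)
  have hhd : Differentiable ℝ h := hh.differentiable one_ne_zero
  intro t
  set p : EuclideanSpace ℝ (Fin d) × EuclideanSpace ℝ (Fin d) := (x t, u t) with hp
  set D := fderiv ℝ h p with hD
  have hDh : HasFDerivAt h D p := (hhd p).hasFDerivAt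
  have hcurve : HasDerivAt (fun s => (x s, u s)) (deriv x t, deriv u t) t :=
    ((hx t).hasDerivAt).prodMk ((hu t).hasDerivAt)
  have hcomp : HasDerivAt (fun s => h (x s, u s)) (D (deriv x t, deriv u t)) t :=
    hDh.comp_hasDerivAt t hcurve
  have hJxD : Jx p = D.comp (ContinuousLinearMap.inl ℝ _ _) := by
    rw [hJx]
    exact (hDh.comp p.1 (hasFDerivAt_prodMk_left p.1 p.2)).fderiv
  have hJuD : Ju p = D.comp (ContinuousLinearMap.inr ℝ _ _) := by
    rw [hJu]
    exact (hDh.comp p.2 (hasFDerivAt_prodMk_right p.1 p.2)).fderiv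
  have hsplit : ∀ a b, D (a, b) = Jx p a + Ju p b := by
    intro a b
    rw [hJxD, hJuD]
    simp only [ContinuousLinearMap.comp_apply, ContinuousLinearMap.inl_apply,
      ContinuousLinearMap.inr_apply]
    rw [← map_add]
    congr 1
    simp [Prod.mk_add_mk]
  have key : D (deriv x t, deriv u t) = hstar p := by
    rw [hsplit, hxdyn, hudyn]
    have hJuJinv : Ju p (Jinv t (hstar p - Jx p (f p))) = hstar p - Jx p (f p) := by
      have := congrArg (fun L => L (hstar p - Jx p (f p))) (hinv₁ t)
      simpa using this
    rw [hJuJinv]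
    abel
  rw [← key]
  exact hcomp
end

section
/- Let K_h be a d×d real matrix and λ > 0 a real number such that ⟨v, K_h v⟩ ≥ λ‖v‖² for every v ∈ ℝ^d. Suppose x, u : ℝ → ℝ^d are differentiable curves such that for every t ∈ ℝ one has x'(t) = f(x(t), u(t)), the linear map J_u(x(t), u(t)) is invertible, and u'(t) = (J_u(x(t), u(t)))⁻¹ ( −K_h · h(x(t), u(t)) − J_x(x(t), u(t)) (f(x(t), u(t))) ). Then for all t₀ ≤ t one has ‖h(x(t), u(t))‖ ≤ exp(−λ (t − t₀)) · ‖h(x(t₀), u(t₀))‖; in particular h(x(t), u(t)) → 0 as t → ∞. -/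
open Filter
open scoped RealInnerProductSpace

private lemma fderiv_split (d : ℕ)
    (h : EuclideanSpace ℝ (Fin d) × EuclideanSpace ℝ (Fin d) → EuclideanSpace ℝ (Fin d))
    (hdiff : Differentiable ℝ h)
    (p : EuclideanSpace ℝ (Fin d) × EuclideanSpace ℝ (Fin d))
    (a b : EuclideanSpace ℝ (Fin d)) :
    fderiv ℝ h p (a, b) = fderiv ℝ (fun y => h (y, p.2)) p.1 a
      + fderiv ℝ (fun v => h (p.1, v)) p.2 b := by
  have hD := (hdiff p).hasFDerivAt
  have h1 : HasFDerivAt (fun y => h (y, p.2))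
      ((fderiv ℝ h p).comp (ContinuousLinearMap.inl ℝ _ _)) p.1 := by
    have := (hD : HasFDerivAt h (fderiv ℝ h p) (p.1, p.2)).comp p.1 (hasFDerivAt_prodMk_left (𝕜 := ℝ) p.1 p.2)
    exact this
  have h2 : HasFDerivAt (fun v => h (p.1, v))
      ((fderiv ℝ h p).comp (ContinuousLinearMap.inr ℝ _ _)) p.2 := by
    have := (hD : HasFDerivAt h (fderiv ℝ h p) (p.1, p.2)).comp p.2 (hasFDerivAt_prodMk_right (𝕜 := ℝ) p.1 p.2)
    exact this
  rw [h1.fderiv, h2.fderiv]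
  simp only [ContinuousLinearMap.coe_comp', Function.comp_apply,
    ContinuousLinearMap.inl_apply, ContinuousLinearMap.inr_apply]
  rw [← ContinuousLinearMap.map_add]
  congr 1
  simp [Prod.ext_iff]


/-- **Theorem 2 of the paper (conclusion).** With the Implicit Control input dynamics
`u' = J_u⁻¹(−K_h h − J_x f)` and `K_h` satisfying `⟨v, K_h v⟩ ≥ λ‖v‖²`, the implicit
function `h(x(t),u(t))` decays exponentially: `‖h(x(t),u(t))‖ ≤ e^{−λ(t−t₀)}‖h(x(t₀),u(t₀))‖`,
and in particular `h(x(t),u(t)) → 0` as `t → ∞`. -/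
theorem implicit_control_h_converges_to_zero
    (d : ℕ) (hd : 0 < d)
    (f : EuclideanSpace ℝ (Fin d) × EuclideanSpace ℝ (Fin d) → EuclideanSpace ℝ (Fin d))
    (fstar : EuclideanSpace ℝ (Fin d) → EuclideanSpace ℝ (Fin d))
    (hf : ContDiff ℝ 1 f) (hfstar : ContDiff ℝ 1 fstar)
    (h : EuclideanSpace ℝ (Fin d) × EuclideanSpace ℝ (Fin d) → EuclideanSpace ℝ (Fin d))
    (hdef : ∀ p, h p = f p - fstar p.1)
    (Jx Ju : EuclideanSpace ℝ (Fin d) × EuclideanSpace ℝ (Fin d) →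
      EuclideanSpace ℝ (Fin d) →L[ℝ] EuclideanSpace ℝ (Fin d))
    (hJx : ∀ p, Jx p = fderiv ℝ (fun y => h (y, p.2)) p.1)
    (hJu : ∀ p, Ju p = fderiv ℝ (fun v => h (p.1, v)) p.2)
    (Kh : Matrix (Fin d) (Fin d) ℝ) (lam : ℝ) (hlam : 0 < lam)
    (hKh : ∀ v : EuclideanSpace ℝ (Fin d),
      lam * ‖v‖ ^ 2 ≤ (inner ℝ v (Matrix.toEuclideanLin Kh v) : ℝ))
    (x u : ℝ → EuclideanSpace ℝ (Fin d))
    (hx : Differentiable ℝ x) (hu : Differentiable ℝ u)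
    (hxdyn : ∀ t, deriv x t = f (x t, u t))
    (Jinv : ℝ → EuclideanSpace ℝ (Fin d) →L[ℝ] EuclideanSpace ℝ (Fin d))
    (hinv₁ : ∀ t, (Ju (x t, u t)).comp (Jinv t) = ContinuousLinearMap.id ℝ _)
    (hinv₂ : ∀ t, (Jinv t).comp (Ju (x t, u t)) = ContinuousLinearMap.id ℝ _)
    (hudyn : ∀ t, deriv u t =
      Jinv t (-(Matrix.toEuclideanLin Kh (h (x t, u t)))
        - Jx (x t, u t) (f (x t, u t)))) :
    (∀ t₀ t : ℝ, t₀ ≤ t →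
      ‖h (x t, u t)‖ ≤ Real.exp (-lam * (t - t₀)) * ‖h (x t₀, u t₀)‖) ∧
    Tendsto (fun t => h (x t, u t)) atTop (nhds 0) := by
  have hdiff : Differentiable ℝ h := by
    have : h = fun p => f p - fstar p.1 := funext hdef
    rw [this]
    exact (hf.differentiable one_ne_zero).sub
      ((hfstar.differentiable one_ne_zero).comp differentiable_fst)
  set g : ℝ → EuclideanSpace ℝ (Fin d) := fun t => h (x t, u t) with hg
  -- derivative of g
  have hgderiv : ∀ t, HasDerivAt g (-(Matrix.toEuclideanLin Kh (g t))) t := by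
    intro t
    have hxu : HasDerivAt (fun s => (x s, u s)) (deriv x t, deriv u t) t :=
      (hx t).hasDerivAt.prodMk (hu t).hasDerivAt
    have hcomp : HasDerivAt g (fderiv ℝ h (x t, u t) (deriv x t, deriv u t)) t :=
      (hdiff (x t, u t)).hasFDerivAt.comp_hasDerivAt t hxu
    have hsplit := fderiv_split d h hdiff (x t, u t) (deriv x t) (deriv u t)
    rw [← hJx (x t, u t), ← hJu (x t, u t)] at hsplit
    have hJuJinv : ∀ v, Ju (x t, u t) (Jinv t v) = v := by
      intro v
      have := congrArg (fun T => T v) (hinv₁ t)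
      simpa using this
    have hval : fderiv ℝ h (x t, u t) (deriv x t, deriv u t)
        = -(Matrix.toEuclideanLin Kh (g t)) := by
      rw [hsplit, hxdyn t, hudyn t, hJuJinv]
      abel
    rw [← hval]
    exact hcomp
  -- the Lyapunov function
  set φ : ℝ → ℝ := fun t => Real.exp (2 * lam * t) * ⟪g t, g t⟫ with hφdef
  have hφderiv : ∀ t, HasDerivAt φ
      (Real.exp (2 * lam * t) * (2 * lam) * ⟪g t, g t⟫
        + Real.exp (2 * lam * t) *
          (⟪g t, -(Matrix.toEuclideanLin Kh (g t))⟫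
            + ⟪-(Matrix.toEuclideanLin Kh (g t)), g t⟫)) t := by
    intro t
    have he : HasDerivAt (fun s => Real.exp (2 * lam * s))
        (Real.exp (2 * lam * t) * (2 * lam)) t := by
      simpa using ((hasDerivAt_id t).const_mul (2 * lam)).exp
    have hi : HasDerivAt (fun s => (⟪g s, g s⟫ : ℝ))
        (⟪g t, -(Matrix.toEuclideanLin Kh (g t))⟫
          + ⟪-(Matrix.toEuclideanLin Kh (g t)), g t⟫) t :=
      (hgderiv t).inner ℝ (hgderiv t)
    exact he.mul hi
  have hφ'le : ∀ t, deriv φ t ≤ 0 := by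
    intro t
    rw [(hφderiv t).deriv]
    have h1 : (⟪g t, -(Matrix.toEuclideanLin Kh (g t))⟫ : ℝ)
        = -⟪g t, Matrix.toEuclideanLin Kh (g t)⟫ := inner_neg_right _ _
    have h2 : (⟪-(Matrix.toEuclideanLin Kh (g t)), g t⟫ : ℝ)
        = -⟪g t, Matrix.toEuclideanLin Kh (g t)⟫ := by
      rw [inner_neg_left, real_inner_comm]
    have hK := hKh (g t)
    have hgg : (⟪g t, g t⟫ : ℝ) = ‖g t‖ ^ 2 := real_inner_self_eq_norm_sq (g t)
    rw [h1, h2, hgg]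
    have hexp : (0:ℝ) < Real.exp (2 * lam * t) := Real.exp_pos _
    nlinarith [hexp, hK, sq_nonneg ‖g t‖]
  have hφanti : Antitone φ :=
    antitone_of_deriv_nonpos (fun t => (hφderiv t).differentiableAt) hφ'le
  -- main inequality
  have main : ∀ t₀ t : ℝ, t₀ ≤ t →
      ‖g t‖ ≤ Real.exp (-lam * (t - t₀)) * ‖g t₀‖ := by
    intro t₀ t ht
    have hmono := hφanti ht
    have hgg : ∀ s, (⟪g s, g s⟫ : ℝ) = ‖g s‖ ^ 2 := fun s =>
      real_inner_self_eq_norm_sq (g s)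
    simp only [hφdef, hgg] at hmono
    have hc : (0:ℝ) < Real.exp (-lam * (t - t₀)) := Real.exp_pos _
    have hkey : ‖g t‖ ^ 2 ≤ (Real.exp (-lam * (t - t₀)) * ‖g t₀‖) ^ 2 := by
      have he : Real.exp (2 * lam * t) * (Real.exp (-lam * (t - t₀)))^2
          = Real.exp (2 * lam * t₀) := by
        rw [sq, ← Real.exp_add, ← Real.exp_add]
        ring_nf
      have hepos : (0:ℝ) < Real.exp (2 * lam * t) := Real.exp_pos _
      rw [mul_pow]
      rw [← mul_le_mul_iff_right₀ hepos, ← mul_assoc, he]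
      exact hmono
    have habs := (abs_le_of_sq_le_sq' hkey (by positivity)).2
    simpa using habs
  refine ⟨main, ?_⟩
  have hlim : Tendsto (fun t : ℝ => Real.exp (-lam * (t - 0)) * ‖g 0‖) atTop (nhds 0) := by
    have h1 : Tendsto (fun t : ℝ => -lam * (t - 0)) atTop atBot :=
      (tendsto_const_mul_atBot_of_neg (by linarith : -lam < 0)).mpr
        (tendsto_atTop_add_const_right _ _ tendsto_id)
    have h2 : Tendsto (fun t : ℝ => Real.exp (-lam * (t - 0))) atTop (nhds 0) :=
      Real.tendsto_exp_atBot.comp h1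
    simpa using h2.mul_const ‖g 0‖
  apply squeeze_zero_norm' _ hlim
  filter_upwards [eventually_ge_atTop (0:ℝ)] with t ht
  exact main 0 t ht
end

section
/- Let r : ℝ → ℝ^d be differentiable (the time derivative ẋ* of a dynamic reference) and define the time-varying function h_r : ℝ × ℝ^d × ℝ^d → ℝ^d by h_r(t, x, u) = f(x, u) − f*(x) − r(t). Suppose x, u : ℝ → ℝ^d are differentiable curves such that for every t ∈ ℝ one has x'(t) = f(x(t), u(t)), the linear map J_u(x(t), u(t)) is invertible, and u'(t) = (J_u(x(t), u(t)))⁻¹ ( h*(x(t), u(t)) − J_x(x(t), u(t)) (f(x(t), u(t))) + r'(t) ), where h* : ℝ^d × ℝ^d → ℝ^d is a given function. Then the map t ↦ h_r(t, x(t), u(t)) is differentiable with d/dt [h_r(t, x(t), u(t))] = h*(x(t), u(t)) for every t ∈ ℝ. -/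
/-- **Corollary 1 mechanism.** With a dynamic reference `r = ẋ*` and the time-varying
implicit function `h_r(t,x,u) = f(x,u) − f*(x) − r(t)`, the modified input dynamics
`u' = J_u⁻¹(h* − J_x f + r')` still imposes the desired dynamics `h*` on
`t ↦ h_r(t, x(t), u(t))`. -/
theorem implicit_control_time_varying_reference
    (d : ℕ) (hd : 0 < d)
    (f : EuclideanSpace ℝ (Fin d) × EuclideanSpace ℝ (Fin d) → EuclideanSpace ℝ (Fin d))
    (fstar : EuclideanSpace ℝ (Fin d) → EuclideanSpace ℝ (Fin d))
    (hf : ContDiff ℝ 1 f) (hfstar : ContDiff ℝ 1 fstar)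
    (h : EuclideanSpace ℝ (Fin d) × EuclideanSpace ℝ (Fin d) → EuclideanSpace ℝ (Fin d))
    (hdef : ∀ p, h p = f p - fstar p.1)
    (Jx Ju : EuclideanSpace ℝ (Fin d) × EuclideanSpace ℝ (Fin d) →
      EuclideanSpace ℝ (Fin d) →L[ℝ] EuclideanSpace ℝ (Fin d))
    (hJx : ∀ p, Jx p = fderiv ℝ (fun y => h (y, p.2)) p.1)
    (hJu : ∀ p, Ju p = fderiv ℝ (fun v => h (p.1, v)) p.2)
    (r : ℝ → EuclideanSpace ℝ (Fin d)) (hr : Differentiable ℝ r)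
    (hr' : ℝ × EuclideanSpace ℝ (Fin d) × EuclideanSpace ℝ (Fin d) →
      EuclideanSpace ℝ (Fin d))
    (hrdef : ∀ t (p : EuclideanSpace ℝ (Fin d) × EuclideanSpace ℝ (Fin d)),
      hr' (t, p) = f p - fstar p.1 - r t)
    (hstar : EuclideanSpace ℝ (Fin d) × EuclideanSpace ℝ (Fin d) → EuclideanSpace ℝ (Fin d))
    (x u : ℝ → EuclideanSpace ℝ (Fin d))
    (hx : Differentiable ℝ x) (hu : Differentiable ℝ u)
    (hxdyn : ∀ t, deriv x t = f (x t, u t))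
    (Jinv : ℝ → EuclideanSpace ℝ (Fin d) →L[ℝ] EuclideanSpace ℝ (Fin d))
    (hinv₁ : ∀ t, (Ju (x t, u t)).comp (Jinv t) = ContinuousLinearMap.id ℝ _)
    (hinv₂ : ∀ t, (Jinv t).comp (Ju (x t, u t)) = ContinuousLinearMap.id ℝ _)
    (hudyn : ∀ t, deriv u t =
      Jinv t (hstar (x t, u t) - Jx (x t, u t) (f (x t, u t)) + deriv r t)) :
    ∀ t, HasDerivAt (fun s => hr' (s, x s, u s)) (hstar (x t, u t)) t := by

  have hh : ContDiff ℝ 1 h := by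
    have : h = fun p => f p - fstar p.1 := funext hdef
    rw [this]
    exact hf.sub (hfstar.comp contDiff_fst)
  intro t
  set p : EuclideanSpace ℝ (Fin d) × EuclideanSpace ℝ (Fin d) := (x t, u t) with hp
  have hD : HasFDerivAt h (fderiv ℝ h p) p :=
    (hh.differentiable one_ne_zero).differentiableAt.hasFDerivAt
  set D := fderiv ℝ h p with hDdef
  -- partial derivatives
  have hJxD : Jx p = D.comp (ContinuousLinearMap.inl ℝ _ _) := by
    rw [hJx p]
    have : HasFDerivAt (fun y => h (y, p.2)) (D.comp (ContinuousLinearMap.inl ℝ _ _)) p.1 := by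
      have h1 : HasFDerivAt (fun y : EuclideanSpace ℝ (Fin d) => (y, p.2))
          (ContinuousLinearMap.inl ℝ (EuclideanSpace ℝ (Fin d)) (EuclideanSpace ℝ (Fin d))) p.1 :=
        HasFDerivAt.prodMk (hasFDerivAt_id p.1) (hasFDerivAt_const p.2 p.1)
      exact hD.comp p.1 h1
    exact this.fderiv
  have hJuD : Ju p = D.comp (ContinuousLinearMap.inr ℝ _ _) := by
    rw [hJu p]
    have : HasFDerivAt (fun v => h (p.1, v)) (D.comp (ContinuousLinearMap.inr ℝ _ _)) p.2 := by
      have h1 : HasFDerivAt (fun v : EuclideanSpace ℝ (Fin d) => (p.1, v))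
          (ContinuousLinearMap.inr ℝ (EuclideanSpace ℝ (Fin d)) (EuclideanSpace ℝ (Fin d))) p.2 :=
        HasFDerivAt.prodMk (hasFDerivAt_const p.1 p.2) (hasFDerivAt_id p.2)
      exact hD.comp p.2 h1
    exact this.fderiv
  have hxu : HasDerivAt (fun s => (x s, u s)) (deriv x t, deriv u t) t :=
    HasDerivAt.prodMk ((hx t).hasDerivAt) ((hu t).hasDerivAt)
  have hcomp : HasDerivAt (fun s => h (x s, u s)) (D (deriv x t, deriv u t)) t :=
    hD.comp_hasDerivAt t hxu
  have hrd : HasDerivAt r (deriv r t) t := (hr t).hasDerivAt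
  have heq : (fun s => hr' (s, x s, u s)) = fun s => h (x s, u s) - r s := by
    funext s
    rw [hrdef s (x s, u s), hdef (x s, u s)]
  rw [heq]
  have hval : D (deriv x t, deriv u t) - deriv r t = hstar (x t, u t) := by
    have hsplit : D (deriv x t, deriv u t) = Jx p (deriv x t) + Ju p (deriv u t) := by
      rw [hJxD, hJuD]
      simp only [ContinuousLinearMap.comp_apply, ContinuousLinearMap.inl_apply,
        ContinuousLinearMap.inr_apply]
      rw [← map_add]
      congr 1
      simp [Prod.ext_iff]
    have hJuinv : Ju p (Jinv t (hstar p - Jx p (f p) + deriv r t))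
        = hstar p - Jx p (f p) + deriv r t := by
      have := congrArg (fun L : EuclideanSpace ℝ (Fin d) →L[ℝ] EuclideanSpace ℝ (Fin d) =>
        L (hstar p - Jx p (f p) + deriv r t)) (hinv₁ t)
      simpa using this
    rw [hsplit, hxdyn t, hudyn t, hJuinv]
    abel
  rw [← hval]
  exact hcomp.sub hrd
end

section
/- Suppose x, u : ℝ → ℝ^n are differentiable curves such that for every t ∈ ℝ one has x'(t) = f(x(t), u(t)), the linear map J_u(x(t), u(t)) : ℝ^n → ℝ^m is surjective (so that J_u J_uᵀ is invertible), and the input satisfies u'(t) = J_uᵀ (J_u J_uᵀ)⁻¹ ( h*(x(t), u(t)) − J_x(x(t), u(t)) (f(x(t), u(t))) ), where all Jacobians are evaluated at (x(t), u(t)) and h* : ℝ^m × ℝ^n → ℝ^m is a given function. Then the map t ↦ h(x(t), u(t)) is differentiable and d/dt [h(x(t), u(t))] = h*(x(t), u(t)) for every t ∈ ℝ. -/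
/-- **Implicit Control with the right Moore–Penrose pseudoinverse (Section IV-C).**
With more inputs than states (`J_u : ℝⁿ → ℝᵐ` surjective, so `J_u J_uᵀ` invertible) and
`u' = J_uᵀ (J_u J_uᵀ)⁻¹ (h* − J_x f)`, the derivative of `h` along the trajectory still
equals the desired dynamics `h*`. -/
theorem implicit_control_pseudoinverse
    (m n : ℕ) (hm : 0 < m) (hn : 0 < n) (hnm : m ≤ n)
    (f : EuclideanSpace ℝ (Fin m) × EuclideanSpace ℝ (Fin n) → EuclideanSpace ℝ (Fin m))
    (fstar : EuclideanSpace ℝ (Fin m) → EuclideanSpace ℝ (Fin m))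
    (hf : ContDiff ℝ 1 f) (hfstar : ContDiff ℝ 1 fstar)
    (h : EuclideanSpace ℝ (Fin m) × EuclideanSpace ℝ (Fin n) → EuclideanSpace ℝ (Fin m))
    (hdef : ∀ p, h p = f p - fstar p.1)
    (Jx : EuclideanSpace ℝ (Fin m) × EuclideanSpace ℝ (Fin n) →
      EuclideanSpace ℝ (Fin m) →L[ℝ] EuclideanSpace ℝ (Fin m))
    (Ju : EuclideanSpace ℝ (Fin m) × EuclideanSpace ℝ (Fin n) →
      EuclideanSpace ℝ (Fin n) →L[ℝ] EuclideanSpace ℝ (Fin m))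
    (hJx : ∀ p, Jx p = fderiv ℝ (fun y => h (y, p.2)) p.1)
    (hJu : ∀ p, Ju p = fderiv ℝ (fun v => h (p.1, v)) p.2)
    (hstar : EuclideanSpace ℝ (Fin m) × EuclideanSpace ℝ (Fin n) → EuclideanSpace ℝ (Fin m))
    (x : ℝ → EuclideanSpace ℝ (Fin m)) (u : ℝ → EuclideanSpace ℝ (Fin n))
    (hx : Differentiable ℝ x) (hu : Differentiable ℝ u)
    (hxdyn : ∀ t, deriv x t = f (x t, u t))
    (hsurj : ∀ t, Function.Surjective (Ju (x t, u t)))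
    -- `Ginv t` is the (two-sided) inverse of `J_u J_uᵀ`, which exists since `J_u` is surjective
    (Ginv : ℝ → EuclideanSpace ℝ (Fin m) →L[ℝ] EuclideanSpace ℝ (Fin m))
    (hGinv₁ : ∀ t, ((Ju (x t, u t)).comp
      (ContinuousLinearMap.adjoint (Ju (x t, u t)))).comp (Ginv t) =
        ContinuousLinearMap.id ℝ _)
    (hGinv₂ : ∀ t, (Ginv t).comp ((Ju (x t, u t)).comp
      (ContinuousLinearMap.adjoint (Ju (x t, u t)))) = ContinuousLinearMap.id ℝ _)
    (hudyn : ∀ t, deriv u t = ContinuousLinearMap.adjoint (Ju (x t, u t))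
      (Ginv t (hstar (x t, u t) - Jx (x t, u t) (f (x t, u t))))) :
    ∀ t, HasDerivAt (fun s => h (x s, u s)) (hstar (x t, u t)) t := by
  intro t
  have hh : Differentiable ℝ h := by
    have : Differentiable ℝ (fun p : EuclideanSpace ℝ (Fin m) × EuclideanSpace ℝ (Fin n) =>
        f p - fstar p.1) :=
      (hf.differentiable one_ne_zero).sub ((hfstar.differentiable one_ne_zero).comp differentiable_fst)
    simpa [funext hdef] using this
  set p : EuclideanSpace ℝ (Fin m) × EuclideanSpace ℝ (Fin n) := (x t, u t) with hp
  set D := fderiv ℝ h p with hD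
  have hDp : HasFDerivAt h D p := (hh p).hasFDerivAt
  have hJxD : Jx p = D.comp (ContinuousLinearMap.inl ℝ _ _) := by
    rw [hJx]
    exact (hDp.comp p.1 (hasFDerivAt_prodMk_left p.1 p.2)).fderiv
  have hJuD : Ju p = D.comp (ContinuousLinearMap.inr ℝ _ _) := by
    rw [hJu]
    exact (hDp.comp p.2 (hasFDerivAt_prodMk_right p.1 p.2)).fderiv
  have hcurve : HasDerivAt (fun s => (x s, u s)) (deriv x t, deriv u t) t :=
    ((hx t).hasDerivAt).prodMk ((hu t).hasDerivAt)
  have hmain : HasDerivAt (fun s => h (x s, u s)) (D (deriv x t, deriv u t)) t :=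
    hDp.comp_hasDerivAt t hcurve
  have key : D (deriv x t, deriv u t) = hstar p := by
    have hsplit : D (deriv x t, deriv u t) = Jx p (deriv x t) + Ju p (deriv u t) := by
      rw [hJxD, hJuD]
      have : (deriv x t, deriv u t) =
          ((deriv x t, 0) : EuclideanSpace ℝ (Fin m) × EuclideanSpace ℝ (Fin n)) + (0, deriv u t) := by
        simp
      rw [this, map_add]
      rfl
    have hJuTer : Ju p (ContinuousLinearMap.adjoint (Ju p)
        (Ginv t (hstar p - Jx p (f p)))) = hstar p - Jx p (f p) := by
      have := congrArg (fun L => L (hstar p - Jx p (f p))) (hGinv₁ t)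
      simpa using this
    rw [hsplit, hxdyn, hudyn, hJuTer]
    abel
  rw [hp] at key
  exact key ▸ hmain
end

section
/- Let K_f : ℝ^d → M_d(ℝ) and K_h : ℝ^d → M_d(ℝ) be functions with values in the d×d real matrices, and suppose there exists ε > 0 such that for all p, q ∈ ℝ^d and all a, b ∈ ℝ^d one has ⟨a, b⟩ − ⟨a, K_f(p) a⟩ − ⟨b, K_h(q) b⟩ ≤ −ε(‖a‖² + ‖b‖²). Let x, h : ℝ → ℝ^d be differentiable curves satisfying, for every t ∈ ℝ, x'(t) = h(t) − K_f(x(t)) x(t) and h'(t) = −K_h(h(t)) h(t). Then for all t₀ ≤ t one has ‖x(t)‖² + ‖h(t)‖² ≤ exp(−2ε(t − t₀)) (‖x(t₀)‖² + ‖h(t₀)‖²); in particular x(t) → 0 and h(t) → 0 as t → ∞. -/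
open Filter

/-- **Theorem 3 (global asymptotic stability of the expanded system).**
If the quadratic form of the block matrix `K` (diagonal blocks `−K_f, −K_h`, off-diagonal
`½I`) is uniformly negative definite with margin `ε`, then along `ẋ = h − K_f(x)x`,
`ḣ = −K_h(h)h` one has `‖x(t)‖² + ‖h(t)‖² ≤ e^{−2ε(t−t₀)}(‖x(t₀)‖² + ‖h(t₀)‖²)`, and in
particular `x(t) → 0` and `h(t) → 0` as `t → ∞`. -/
theorem expanded_system_GAS_theorem3
    (d : ℕ) (hd : 0 < d)
    (Kf Kh : EuclideanSpace ℝ (Fin d) → Matrix (Fin d) (Fin d) ℝ)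
    (eps : ℝ) (heps : 0 < eps)
    (hK : ∀ p q a b : EuclideanSpace ℝ (Fin d),
      (inner ℝ a b : ℝ) - (inner ℝ a (Matrix.toEuclideanLin (Kf p) a) : ℝ)
        - (inner ℝ b (Matrix.toEuclideanLin (Kh q) b) : ℝ)
      ≤ -eps * (‖a‖ ^ 2 + ‖b‖ ^ 2))
    (x h : ℝ → EuclideanSpace ℝ (Fin d))
    (hx : Differentiable ℝ x) (hh : Differentiable ℝ h)
    (hxdyn : ∀ t, deriv x t = h t - Matrix.toEuclideanLin (Kf (x t)) (x t))
    (hhdyn : ∀ t, deriv h t = -(Matrix.toEuclideanLin (Kh (h t)) (h t))) :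
    (∀ t₀ t : ℝ, t₀ ≤ t →
      ‖x t‖ ^ 2 + ‖h t‖ ^ 2 ≤
        Real.exp (-(2 * eps) * (t - t₀)) * (‖x t₀‖ ^ 2 + ‖h t₀‖ ^ 2)) ∧
    Tendsto x atTop (nhds 0) ∧ Tendsto h atTop (nhds 0) := by
  set V : ℝ → ℝ := fun t => ‖x t‖ ^ 2 + ‖h t‖ ^ 2 with hVdef
  have hVnonneg : ∀ t, 0 ≤ V t := fun t => by positivity
  -- derivative of V
  have hVderiv : ∀ t, HasDerivAt V
      (2 * ((inner ℝ (x t) (deriv x t) : ℝ) + (inner ℝ (h t) (deriv h t) : ℝ))) t := by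
    intro t
    have h1 : HasDerivAt (fun s => (inner ℝ (x s) (x s) : ℝ))
        ((inner ℝ (x t) (deriv x t) : ℝ) + (inner ℝ (deriv x t) (x t) : ℝ)) t :=
      (hx t).hasDerivAt.inner ℝ (hx t).hasDerivAt
    have h2 : HasDerivAt (fun s => (inner ℝ (h s) (h s) : ℝ))
        ((inner ℝ (h t) (deriv h t) : ℝ) + (inner ℝ (deriv h t) (h t) : ℝ)) t :=
      (hh t).hasDerivAt.inner ℝ (hh t).hasDerivAt
    have h3 := h1.add h2
    have heq : V = fun s => (inner ℝ (x s) (x s) : ℝ) + (inner ℝ (h s) (h s) : ℝ) := by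
      funext s
      simp only [hVdef, real_inner_self_eq_norm_sq]
    rw [heq]
    refine h3.congr_deriv ?_
    rw [real_inner_comm (deriv x t) (x t), real_inner_comm (deriv h t) (h t)]
    ring
  -- the derivative bound
  have hVbound : ∀ t,
      2 * ((inner ℝ (x t) (deriv x t) : ℝ) + (inner ℝ (h t) (deriv h t) : ℝ))
        ≤ -(2 * eps) * V t := by
    intro t
    have key := hK (x t) (h t) (x t) (h t)
    have e1 : (inner ℝ (x t) (deriv x t) : ℝ)
        = (inner ℝ (x t) (h t) : ℝ) - (inner ℝ (x t) (Matrix.toEuclideanLin (Kf (x t)) (x t)) : ℝ) := by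
      rw [hxdyn t, inner_sub_right]
    have e2 : (inner ℝ (h t) (deriv h t) : ℝ)
        = -(inner ℝ (h t) (Matrix.toEuclideanLin (Kh (h t)) (h t)) : ℝ) := by
      rw [hhdyn t, inner_neg_right]
    rw [e1, e2]
    simp only [hVdef]
    nlinarith [key]
  -- Lyapunov function with exponential weight
  set g : ℝ → ℝ := fun t => Real.exp (2 * eps * t) * V t with hgdef
  have hgderiv : ∀ t, HasDerivAt g
      (Real.exp (2 * eps * t) * (2 * eps) * V t
        + Real.exp (2 * eps * t) *
          (2 * ((inner ℝ (x t) (deriv x t) : ℝ) + (inner ℝ (h t) (deriv h t) : ℝ)))) t := by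
    intro t
    have he : HasDerivAt (fun s => Real.exp (2 * eps * s)) (Real.exp (2 * eps * t) * (2 * eps)) t := by
      have := ((hasDerivAt_id t).const_mul (2 * eps)).exp
      simpa [mul_comm] using this
    exact he.mul (hVderiv t)
  have hganti : Antitone g := by
    apply antitone_of_deriv_nonpos
    · intro t
      exact (hgderiv t).differentiableAt
    · intro t
      rw [(hgderiv t).deriv]
      have hb := hVbound t
      have hpos : (0:ℝ) < Real.exp (2 * eps * t) := Real.exp_pos _
      nlinarith [hpos, hb]
  have main : ∀ t₀ t : ℝ, t₀ ≤ t →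
      V t ≤ Real.exp (-(2 * eps) * (t - t₀)) * V t₀ := by
    intro t₀ t ht
    have hg := hganti ht
    have hpos : (0:ℝ) < Real.exp (2 * eps * t) := Real.exp_pos _
    rw [hgdef] at hg
    simp only at hg
    have := mul_le_mul_of_nonneg_left hg (le_of_lt (Real.exp_pos (-(2 * eps * t))))
    calc V t = Real.exp (-(2 * eps * t)) * (Real.exp (2 * eps * t) * V t) := by
          rw [← mul_assoc, ← Real.exp_add]; simp
      _ ≤ Real.exp (-(2 * eps * t)) * (Real.exp (2 * eps * t₀) * V t₀) := this
      _ = Real.exp (-(2 * eps) * (t - t₀)) * V t₀ := by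
          rw [← mul_assoc, ← Real.exp_add]; ring_nf
  have hVlim : Tendsto V atTop (nhds 0) := by
    have h1 : Tendsto (fun t : ℝ => -(2 * eps) * (t - 0)) atTop atBot := by
      have h0 : Tendsto (fun t : ℝ => (2 * eps) * t) atTop atTop :=
        Tendsto.const_mul_atTop (by linarith : (0:ℝ) < 2 * eps) tendsto_id
      have heq : (fun t : ℝ => -(2 * eps) * (t - 0)) = fun t : ℝ => -((2 * eps) * t) := by
        funext t; ring
      rw [heq]
      exact tendsto_neg_atTop_atBot.comp h0
    have h2 : Tendsto (fun t : ℝ => Real.exp (-(2 * eps) * (t - 0)) * V 0) atTop (nhds 0) := by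
      simpa using (Real.tendsto_exp_atBot.comp h1).mul_const (V 0)
    apply squeeze_zero' (Eventually.of_forall hVnonneg) _ h2
    filter_upwards [eventually_ge_atTop (0:ℝ)] with t ht
    exact main 0 t ht
  have normlim : ∀ (y : ℝ → EuclideanSpace ℝ (Fin d)),
      (∀ t, ‖y t‖ ^ 2 ≤ V t) → Tendsto y atTop (nhds 0) := by
    intro y hy
    have hsq : Tendsto (fun t => ‖y t‖ ^ 2) atTop (nhds 0) :=
      squeeze_zero' (Eventually.of_forall fun t => by positivity)
        (Eventually.of_forall hy) hVlim
    have hn : Tendsto (fun t => ‖y t‖) atTop (nhds 0) := by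
      have h0 := (Real.continuous_sqrt.tendsto 0).comp hsq
      have heq : ((fun r => Real.sqrt r) ∘ fun t => ‖y t‖ ^ 2) = fun t => ‖y t‖ := by
        funext t; simp [Function.comp, Real.sqrt_sq (norm_nonneg _)]
      rw [heq] at h0
      simpa using h0
    exact tendsto_zero_iff_norm_tendsto_zero.mpr hn
  exact ⟨main, normlim x fun t => le_add_of_nonneg_right (by positivity),
    normlim h fun t => le_add_of_nonneg_left (by positivity)⟩
end

section
/- Let a, b > 0 be reals with 4ab > 1, let B ≥ 0, and fix a positive integer m. Then there exists c₀ > 0 such that for every c with 0 < c ≤ c₀ and every m×m real matrix M whose operator norm satisfies ‖M‖ ≤ B, the quadratic form Q on ℝ^m × ℝ^m × ℝ^m defined by Q(z₁, z₂, z₃) = −a‖z₁‖² + ⟨z₁, z₂⟩ − b‖z₂‖² − c⟨z₂, M z₃⟩ − c‖z₃‖² is negative definite, i.e., Q(z₁, z₂, z₃) < 0 for every (z₁, z₂, z₃) ≠ (0, 0, 0). -/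
set_option maxHeartbeats 1600000 in
/-- **Existence of an adaptation gain making `K̄` of Eq. (36) negative definite.**
If `a, b > 0` with `4ab > 1` and `B ≥ 0`, there exists `c₀ > 0` such that for every
`0 < c ≤ c₀` and every `m×m` matrix `M` of operator norm at most `B`, the quadratic form
`Q(z₁,z₂,z₃) = −a‖z₁‖² + ⟨z₁,z₂⟩ − b‖z₂‖² − c⟨z₂, M z₃⟩ − c‖z₃‖²` is negative definite. -/
theorem exists_adaptation_gain_negative_definite
    (m : ℕ) (hm : 0 < m) (a b B : ℝ) (ha : 0 < a) (hb : 0 < b)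
    (hab : 1 < 4 * a * b) (hB : 0 ≤ B) :
    ∃ c₀ : ℝ, 0 < c₀ ∧ ∀ c : ℝ, 0 < c → c ≤ c₀ →
      ∀ M : Matrix (Fin m) (Fin m) ℝ,
        ‖(Matrix.toEuclideanCLM (𝕜 := ℝ) M : EuclideanSpace ℝ (Fin m) →L[ℝ]
            EuclideanSpace ℝ (Fin m))‖ ≤ B →
        ∀ z₁ z₂ z₃ : EuclideanSpace ℝ (Fin m), (z₁, z₂, z₃) ≠ 0 →
          -a * ‖z₁‖ ^ 2 + (inner ℝ z₁ z₂ : ℝ) - b * ‖z₂‖ ^ 2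
            - c * (inner ℝ z₂ (Matrix.toEuclideanLin M z₃) : ℝ) - c * ‖z₃‖ ^ 2 < 0 := by
  set ε : ℝ := (4 * a * b - 1) / (4 * (a + b)) with hε_def
  have hab' : 0 < a + b := by linarith
  have hε : 0 < ε := div_pos (by linarith) (by positivity)
  have hεa : ε < a := by
    rw [hε_def, div_lt_iff₀ (by positivity)]; nlinarith [sq_nonneg (a - b), mul_pos ha hb]
  have hεb : ε < b := by
    rw [hε_def, div_lt_iff₀ (by positivity)]; nlinarith [sq_nonneg (a - b), mul_pos ha hb]
  have hkey : 4 * (a - ε) * (b - ε) ≥ 1 := by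
    have h : ε * (4 * (a + b)) = 4 * a * b - 1 := by
      rw [hε_def, div_mul_cancel₀]; positivity
    nlinarith [sq_nonneg ε]
  refine ⟨ε / (B ^ 2 + 1), by positivity, ?_⟩
  intro c hc hcε M hM z₁ z₂ z₃ hz
  set x := ‖z₁‖ with hxdef; set y := ‖z₂‖ with hydef; set w := ‖z₃‖ with hwdef
  have hx : 0 ≤ x := norm_nonneg _
  have hy : 0 ≤ y := norm_nonneg _
  have hw : 0 ≤ w := norm_nonneg _
  have hcB : c * B ^ 2 ≤ ε := by
    have h1 : c * (B ^ 2 + 1) ≤ ε := by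
      rw [← div_mul_cancel₀ ε (show (B:ℝ)^2 + 1 ≠ 0 by positivity)]
      exact mul_le_mul_of_nonneg_right hcε (by positivity)
    nlinarith
  set p : ℝ := (inner ℝ z₁ z₂ : ℝ) with hpdef
  set q : ℝ := (inner ℝ z₂ (Matrix.toEuclideanLin M z₃) : ℝ) with hqdef
  -- bounds on inner products
  have h1 : p ≤ x * y := real_inner_le_norm z₁ z₂
  have hMz : ‖Matrix.toEuclideanLin M z₃‖ ≤ B * w := by
    have heq : Matrix.toEuclideanLin M z₃ =
        (Matrix.toEuclideanCLM (𝕜 := ℝ) M : EuclideanSpace ℝ (Fin m) →L[ℝ]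
          EuclideanSpace ℝ (Fin m)) z₃ := by
      rw [← Matrix.coe_toEuclideanCLM_eq_toEuclideanLin]; rfl
    rw [heq]
    calc ‖(Matrix.toEuclideanCLM (𝕜 := ℝ) M : EuclideanSpace ℝ (Fin m) →L[ℝ]
          EuclideanSpace ℝ (Fin m)) z₃‖ ≤ _ * w := ContinuousLinearMap.le_opNorm _ _
      _ ≤ B * w := mul_le_mul_of_nonneg_right hM hw
  have h2 : -q ≤ y * (B * w) := by
    have habs : |q| ≤ y * (B * w) :=
      (abs_real_inner_le_norm z₂ _).trans (mul_le_mul_of_nonneg_left hMz hy)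
    linarith [neg_abs_le q]
  -- at least one of the vectors is nonzero
  have hz' : z₁ ≠ 0 ∨ z₂ ≠ 0 ∨ z₃ ≠ 0 := by
    by_contra h
    push_neg at h
    exact hz (by simp [Prod.ext_iff, h.1, h.2.1, h.2.2])
  have hpos : 0 < x ^ 2 + y ^ 2 + w ^ 2 := by
    rcases hz' with h | h | h
    · nlinarith [pow_pos (norm_pos_iff.mpr h : 0 < x) 2, sq_nonneg y, sq_nonneg w]
    · nlinarith [pow_pos (norm_pos_iff.mpr h : 0 < y) 2, sq_nonneg x, sq_nonneg w]
    · nlinarith [pow_pos (norm_pos_iff.mpr h : 0 < w) 2, sq_nonneg x, sq_nonneg y]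
  clear_value p q x y w
  clear hz hM hpdef hqdef hxdef hydef hwdef hMz hz' M z₁ z₂ z₃
  -- the two key scalar inequalities
  have key1 : x * y ≤ (a - ε) * x ^ 2 + (b - ε) * y ^ 2 := by
    nlinarith [sq_nonneg (2 * (a - ε) * x - y), mul_nonneg hx hy]
  have key2 : 2 * (c * B * (y * w)) ≤ ε * y ^ 2 + c * w ^ 2 := by
    nlinarith [sq_nonneg (ε * y - c * B * w),
      mul_nonneg (mul_nonneg (sub_nonneg.mpr hcB) hc.le) (sq_nonneg w)]
  have hQ : -a * x ^ 2 + p - b * y ^ 2 - c * q - c * w ^ 2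
      ≤ -ε * x ^ 2 - (ε / 2) * y ^ 2 - (c / 2) * w ^ 2 := by
    have h2' : -(c * q) ≤ c * B * (y * w) :=
      calc -(c * q) = c * -q := by ring
        _ ≤ c * (y * (B * w)) := mul_le_mul_of_nonneg_left h2 hc.le
        _ = c * B * (y * w) := by ring
    linarith
  have hterms1 : 0 ≤ ε * x ^ 2 := by positivity
  have hterms2 : 0 ≤ (ε / 2) * y ^ 2 := by positivity
  have hterms3 : 0 ≤ (c / 2) * w ^ 2 := by positivity
  nlinarith [mul_pos hε hpos, mul_pos hc hpos,
    mul_nonneg hc.le (sq_nonneg x), mul_nonneg hc.le (sq_nonneg y),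
    mul_nonneg hε.le (sq_nonneg w)]
end

section
/- Let h*_θ : ℝ → ℝ^d be any function and define h̃*(t) = h*_θ(t) − H'(t) + Ĵ_x(t)(x'(t) − x̂'(t)), where H(t) = θ f(x(t), u(t)) − f*(x(t)) (which is differentiable by the chain rule). Suppose the adaptation law θ̂'(t) · f(x(t), u(t)) = −( h̃*(t) + Ĵ_x(t) x̂'(t) + Ĵ_u(t) u'(t) ) holds for every t ∈ ℝ. Then the mismatch h̃(t) = (θ − θ̂(t)) f(x(t), u(t)) is differentiable with h̃'(t) = h*_θ(t) for every t ∈ ℝ. -/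
attribute [local instance] Matrix.normedAddCommGroup Matrix.normedSpace

/-- The map sending a matrix to its action on Euclidean space, as a continuous linear map. -/
noncomputable def matCLM (d : ℕ) : Matrix (Fin d) (Fin d) ℝ →L[ℝ]
    (EuclideanSpace ℝ (Fin d) →L[ℝ] EuclideanSpace ℝ (Fin d)) :=
  LinearMap.toContinuousLinearMap
    { toFun := fun M => Matrix.toEuclideanCLM (𝕜 := ℝ) M,
      map_add' := fun a b => map_add _ a b,
      map_smul' := fun c a => map_smul _ c a }

lemma matCLM_eq (d : ℕ) (M : Matrix (Fin d) (Fin d) ℝ) :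
    matCLM d M = Matrix.toEuclideanCLM (𝕜 := ℝ) M := rfl

lemma matCLM_apply (d : ℕ) (M : Matrix (Fin d) (Fin d) ℝ) (v : EuclideanSpace ℝ (Fin d)) :
    matCLM d M v = Matrix.toEuclideanLin M v := by
  rw [matCLM_eq]
  exact DFunLike.congr_fun (Matrix.coe_toEuclideanCLM_eq_toEuclideanLin M) v


/-- **Proposition 1 key identity (Eqs. (24)–(27)).** The adaptation law
`θ̂' f = −(h̃* + Ĵ_x x̂' + Ĵ_u u')` with `h̃* = h*_θ − H' + Ĵ_x(x' − x̂')` imposes the desired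
dynamics `h*_θ` on the model mismatch `h̃(t) = (θ − θ̂(t)) f(x(t),u(t))`. -/
theorem adaptation_law_imposes_desired_mismatch_dynamics
    (d : ℕ) (hd : 0 < d)
    (f : EuclideanSpace ℝ (Fin d) × EuclideanSpace ℝ (Fin d) → EuclideanSpace ℝ (Fin d))
    (fstar : EuclideanSpace ℝ (Fin d) → EuclideanSpace ℝ (Fin d))
    (hf : ContDiff ℝ 1 f) (hfstar : ContDiff ℝ 1 fstar)
    -- true parameters `θ` and differentiable parameter estimates `θ̂` with derivative `θ̂'`
    (θ : Matrix (Fin d) (Fin d) ℝ)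
    (θhat θhat' : ℝ → Matrix (Fin d) (Fin d) ℝ)
    (hθhat : ∀ (i j : Fin d) (t : ℝ), HasDerivAt (fun s => θhat s i j) (θhat' t i j) t)
    -- trajectories with `x' = θ f(x,u)`
    (x u : ℝ → EuclideanSpace ℝ (Fin d))
    (hx : Differentiable ℝ x) (hu : Differentiable ℝ u)
    (hxdyn : ∀ t, deriv x t = Matrix.toEuclideanLin θ (f (x t, u t)))
    -- estimated velocity `x̂'(t) = θ̂(t) f(x(t),u(t))`
    (xhatdot : ℝ → EuclideanSpace ℝ (Fin d))
    (hxhatdot : ∀ t, xhatdot t = Matrix.toEuclideanLin (θhat t) (f (x t, u t)))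
    -- estimated Jacobians `Ĵ_x = θ̂ ∘ D_x f − Df*` and `Ĵ_u = θ̂ ∘ D_u f`
    (Jxhat Juhat : ℝ → EuclideanSpace ℝ (Fin d) →L[ℝ] EuclideanSpace ℝ (Fin d))
    (hJxhat : ∀ t, Jxhat t =
      ((Matrix.toEuclideanCLM (𝕜 := ℝ) (θhat t) : EuclideanSpace ℝ (Fin d) →L[ℝ]
          EuclideanSpace ℝ (Fin d)).comp (fderiv ℝ (fun y => f (y, u t)) (x t)))
        - fderiv ℝ fstar (x t))
    (hJuhat : ∀ t, Juhat t =
      (Matrix.toEuclideanCLM (𝕜 := ℝ) (θhat t) : EuclideanSpace ℝ (Fin d) →L[ℝ]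
          EuclideanSpace ℝ (Fin d)).comp (fderiv ℝ (fun v => f (x t, v)) (u t)))
    -- `H(t) = θ f(x(t),u(t)) − f*(x(t))` (differentiable by the chain rule)
    (H : ℝ → EuclideanSpace ℝ (Fin d))
    (hH : ∀ t, H t = Matrix.toEuclideanLin θ (f (x t, u t)) - fstar (x t))
    -- desired mismatch dynamics `h*_θ` and `h̃* = h*_θ − H' + Ĵ_x (x' − x̂')`
    (hθstar : ℝ → EuclideanSpace ℝ (Fin d))
    (htilstar : ℝ → EuclideanSpace ℝ (Fin d))
    (hhtilstar : ∀ t, htilstar t =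
      hθstar t - deriv H t + Jxhat t (deriv x t - xhatdot t))
    -- the adaptation law `θ̂'(t) f = −(h̃* + Ĵ_x x̂' + Ĵ_u u')`
    (hadapt : ∀ t, Matrix.toEuclideanLin (θhat' t) (f (x t, u t)) =
      -(htilstar t + Jxhat t (xhatdot t) + Juhat t (deriv u t))) :
    ∀ t, HasDerivAt
      (fun s => Matrix.toEuclideanLin (θ - θhat s) (f (x s, u s))) (hθstar t) t := by
  intro t
  have hfd : Differentiable ℝ f := hf.differentiable one_ne_zero
  have hfsd : Differentiable ℝ fstar := hfstar.differentiable one_ne_zero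
  set Df := fderiv ℝ f (x t, u t) with hDfdef
  have hxu : HasDerivAt (fun s => (x s, u s)) (deriv x t, deriv u t) t :=
    HasDerivAt.prodMk (hx t).hasDerivAt (hu t).hasDerivAt
  have hFd : HasDerivAt (fun s => f (x s, u s)) (Df (deriv x t, deriv u t)) t :=
    (hfd (x t, u t)).hasFDerivAt.comp_hasDerivAt t hxu
  have hDx : fderiv ℝ (fun y => f (y, u t)) (x t) =
      Df.comp (ContinuousLinearMap.inl ℝ _ _) :=
    ((hfd (x t, u t)).hasFDerivAt.comp (x t) (hasFDerivAt_prodMk_left (x t) (u t))).fderiv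
  have hDu : fderiv ℝ (fun v => f (x t, v)) (u t) =
      Df.comp (ContinuousLinearMap.inr ℝ _ _) :=
    ((hfd (x t, u t)).hasFDerivAt.comp (u t) (hasFDerivAt_prodMk_right (x t) (u t))).fderiv
  have hsplit : Df (deriv x t, deriv u t) = Df (deriv x t, 0) + Df (0, deriv u t) := by
    rw [← map_add]; congr 1 <;> simp
  -- derivative of the estimated parameters as CLMs
  have hθM : HasDerivAt (fun s => matCLM d (θhat s)) (matCLM d (θhat' t)) t := by
    have h1 : HasDerivAt θhat (θhat' t) t := by
      exact hasDerivAt_pi.2 fun i => hasDerivAt_pi.2 fun j => hθhat i j t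
    exact (matCLM d).hasFDerivAt.comp_hasDerivAt t h1
  -- derivative of s ↦ θ f(x s, u s)
  have hθF : HasDerivAt (fun s => matCLM d θ (f (x s, u s)))
      (matCLM d θ (Df (deriv x t, deriv u t))) t :=
    (matCLM d θ).hasFDerivAt.comp_hasDerivAt t hFd
  -- derivative of H
  have hfsx : HasDerivAt (fun s => fstar (x s)) (fderiv ℝ fstar (x t) (deriv x t)) t :=
    (hfsd (x t)).hasFDerivAt.comp_hasDerivAt t (hx t).hasDerivAt
  have hHd : HasDerivAt H
      (matCLM d θ (Df (deriv x t, deriv u t)) - fderiv ℝ fstar (x t) (deriv x t)) t := by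
    have h2 := hθF.sub hfsx
    have hfun : H = fun s => matCLM d θ (f (x s, u s)) - fstar (x s) := by
      funext s; rw [hH s, matCLM_apply]
    rw [hfun]; exact h2
  have hderivH : deriv H t =
      matCLM d θ (Df (deriv x t, deriv u t)) - fderiv ℝ fstar (x t) (deriv x t) :=
    hHd.deriv
  -- main derivative computation
  have hmain : HasDerivAt (fun s => matCLM d θ (f (x s, u s)) - matCLM d (θhat s) (f (x s, u s)))
      (matCLM d θ (Df (deriv x t, deriv u t)) -
        (matCLM d (θhat' t) (f (x t, u t)) + matCLM d (θhat t) (Df (deriv x t, deriv u t)))) t :=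
    hθF.sub (hθM.clm_apply hFd)
  have hfun : (fun s => Matrix.toEuclideanLin (θ - θhat s) (f (x s, u s))) =
      fun s => matCLM d θ (f (x s, u s)) - matCLM d (θhat s) (f (x s, u s)) := by
    funext s
    rw [matCLM_apply, matCLM_apply, map_sub, LinearMap.sub_apply]
  rw [hfun]
  convert hmain using 1
  -- now the algebraic identity
  have hadapt' : matCLM d (θhat' t) (f (x t, u t)) =
      -(htilstar t + Jxhat t (xhatdot t) + Juhat t (deriv u t)) := by
    rw [matCLM_apply]; exact hadapt t
  rw [hadapt', hhtilstar t, hderivH, hJxhat t, hJuhat t, hDx, hDu, ← matCLM_eq, hsplit]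
  simp only [ContinuousLinearMap.sub_apply, ContinuousLinearMap.comp_apply,
    ContinuousLinearMap.inl_apply, ContinuousLinearMap.inr_apply, map_add, map_sub,
    Prod.mk_sub_mk, sub_zero, zero_sub, map_neg]
  abel
end

section
/- Let K_θ be a d×d real matrix and λ > 0 a real number with ⟨v, K_θ v⟩ ≥ λ‖v‖² for every v ∈ ℝ^d, and let H(t) = θ f(x(t), u(t)) − f*(x(t)) and h̃(t) = (θ − θ̂(t)) f(x(t), u(t)). Suppose the adaptation law θ̂'(t) · f(x(t), u(t)) = −( h̃*(t) + Ĵ_x(t) x̂'(t) + Ĵ_u(t) u'(t) ) holds for every t ∈ ℝ, where h̃*(t) = −K_θ h̃(t) − H'(t) + Ĵ_x(t)(x'(t) − x̂'(t)). Then for all t₀ ≤ t one has ‖h̃(t)‖ ≤ exp(−λ(t − t₀)) ‖h̃(t₀)‖; in particular h̃(t) → 0 as t → ∞, i.e., the estimated model ĥ(t) = θ̂(t) f(x(t), u(t)) − f*(x(t)) converges to the true quantity H(t). -/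
set_option maxHeartbeats 1000000


open Filter

section Aux

/-- The map sending a matrix (as a plain function) to its continuous linear endomorphism
of Euclidean space, as a linear map. -/
noncomputable def adaptToCLM (d : ℕ) : (Fin d → Fin d → ℝ) →ₗ[ℝ]
    (EuclideanSpace ℝ (Fin d) →L[ℝ] EuclideanSpace ℝ (Fin d)) where
  toFun M := Matrix.toEuclideanCLM (𝕜 := ℝ) (Matrix.of M)
  map_add' A B := map_add _ (Matrix.of A) (Matrix.of B)
  map_smul' c A := map_smul _ c (Matrix.of A)

lemma adapt_hasDerivAt_CLM {d : ℕ} (θhat θhat' : ℝ → Matrix (Fin d) (Fin d) ℝ)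
    (hθhat : ∀ (i j : Fin d) (t : ℝ), HasDerivAt (fun s => θhat s i j) (θhat' t i j) t)
    (t : ℝ) :
    HasDerivAt (fun s => Matrix.toEuclideanCLM (𝕜 := ℝ) (θhat s))
      (Matrix.toEuclideanCLM (𝕜 := ℝ) (θhat' t)) t := by
  have h : HasDerivAt (fun s i j => θhat s i j : ℝ → Fin d → Fin d → ℝ)
      (fun i j => θhat' t i j) t := by
    rw [hasDerivAt_pi]; intro i; rw [hasDerivAt_pi]; intro j; exact hθhat i j t
  exact ((adaptToCLM d).toContinuousLinearMap.hasFDerivAt.comp_hasDerivAt t h)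

lemma adapt_fderiv_split {d : ℕ}
    (f : EuclideanSpace ℝ (Fin d) × EuclideanSpace ℝ (Fin d) → EuclideanSpace ℝ (Fin d))
    (hf : ContDiff ℝ 1 f) (a b v w : EuclideanSpace ℝ (Fin d)) :
    fderiv ℝ f (a, b) (v, w) =
      fderiv ℝ (fun y => f (y, b)) a v + fderiv ℝ (fun z => f (a, z)) b w := by
  have hd := (hf.differentiable one_ne_zero (a, b)).hasFDerivAt
  have h1 : HasFDerivAt (fun y => f (y, b))
      ((fderiv ℝ f (a, b)).comp ((ContinuousLinearMap.id ℝ _).prod 0)) a :=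
    hd.comp a (HasFDerivAt.prodMk (hasFDerivAt_id a) (hasFDerivAt_const b a))
  have h2 : HasFDerivAt (fun z => f (a, z))
      ((fderiv ℝ f (a, b)).comp ((0 : _ →L[ℝ] _).prod (ContinuousLinearMap.id ℝ _))) b :=
    hd.comp b (HasFDerivAt.prodMk (hasFDerivAt_const a b) (hasFDerivAt_id b))
  rw [h1.fderiv, h2.fderiv]
  simp only [ContinuousLinearMap.comp_apply, ContinuousLinearMap.prod_apply,
    ContinuousLinearMap.id_apply, ContinuousLinearMap.zero_apply]
  rw [← map_add]
  congr 1
  simp [Prod.ext_iff]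

end Aux

/-- **Proposition 1 (conclusion).** Under the adaptation law with stable desired mismatch
dynamics `h̃* = −K_θ h̃ − H' + Ĵ_x(x' − x̂')`, where `⟨v, K_θ v⟩ ≥ λ‖v‖²`, the model mismatch
`h̃(t) = (θ − θ̂(t)) f(x(t),u(t))` decays exponentially and tends to `0`; i.e. the estimated
model `ĥ(t) = θ̂(t) f(x(t),u(t)) − f*(x(t))` converges to the true `H(t)`. -/
theorem adaptation_law_mismatch_converges
    (d : ℕ) (hd : 0 < d)
    (f : EuclideanSpace ℝ (Fin d) × EuclideanSpace ℝ (Fin d) → EuclideanSpace ℝ (Fin d))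
    (fstar : EuclideanSpace ℝ (Fin d) → EuclideanSpace ℝ (Fin d))
    (hf : ContDiff ℝ 1 f) (hfstar : ContDiff ℝ 1 fstar)
    (θ : Matrix (Fin d) (Fin d) ℝ)
    (θhat θhat' : ℝ → Matrix (Fin d) (Fin d) ℝ)
    (hθhat : ∀ (i j : Fin d) (t : ℝ), HasDerivAt (fun s => θhat s i j) (θhat' t i j) t)
    (x u : ℝ → EuclideanSpace ℝ (Fin d))
    (hx : Differentiable ℝ x) (hu : Differentiable ℝ u)
    (hxdyn : ∀ t, deriv x t = Matrix.toEuclideanLin θ (f (x t, u t)))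
    (xhatdot : ℝ → EuclideanSpace ℝ (Fin d))
    (hxhatdot : ∀ t, xhatdot t = Matrix.toEuclideanLin (θhat t) (f (x t, u t)))
    (Jxhat Juhat : ℝ → EuclideanSpace ℝ (Fin d) →L[ℝ] EuclideanSpace ℝ (Fin d))
    (hJxhat : ∀ t, Jxhat t =
      ((Matrix.toEuclideanCLM (𝕜 := ℝ) (θhat t) : EuclideanSpace ℝ (Fin d) →L[ℝ]
          EuclideanSpace ℝ (Fin d)).comp (fderiv ℝ (fun y => f (y, u t)) (x t)))
        - fderiv ℝ fstar (x t))
    (hJuhat : ∀ t, Juhat t =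
      (Matrix.toEuclideanCLM (𝕜 := ℝ) (θhat t) : EuclideanSpace ℝ (Fin d) →L[ℝ]
          EuclideanSpace ℝ (Fin d)).comp (fderiv ℝ (fun v => f (x t, v)) (u t)))
    (H : ℝ → EuclideanSpace ℝ (Fin d))
    (hH : ∀ t, H t = Matrix.toEuclideanLin θ (f (x t, u t)) - fstar (x t))
    -- the model mismatch `h̃(t) = (θ − θ̂(t)) f(x(t),u(t))`
    (htil : ℝ → EuclideanSpace ℝ (Fin d))
    (hhtil : ∀ t, htil t = Matrix.toEuclideanLin (θ - θhat t) (f (x t, u t)))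
    -- stable desired mismatch dynamics: `K_θ` with `⟨v, K_θ v⟩ ≥ λ‖v‖²`, `λ > 0`
    (Kθ : Matrix (Fin d) (Fin d) ℝ) (lam : ℝ) (hlam : 0 < lam)
    (hKθ : ∀ v : EuclideanSpace ℝ (Fin d),
      lam * ‖v‖ ^ 2 ≤ (inner ℝ v (Matrix.toEuclideanLin Kθ v) : ℝ))
    (htilstar : ℝ → EuclideanSpace ℝ (Fin d))
    (hhtilstar : ∀ t, htilstar t =
      -(Matrix.toEuclideanLin Kθ (htil t)) - deriv H t
        + Jxhat t (deriv x t - xhatdot t))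
    -- the adaptation law `θ̂'(t) f = −(h̃* + Ĵ_x x̂' + Ĵ_u u')`
    (hadapt : ∀ t, Matrix.toEuclideanLin (θhat' t) (f (x t, u t)) =
      -(htilstar t + Jxhat t (xhatdot t) + Juhat t (deriv u t))) :
    (∀ t₀ t : ℝ, t₀ ≤ t → ‖htil t‖ ≤ Real.exp (-lam * (t - t₀)) * ‖htil t₀‖) ∧
    Tendsto htil atTop (nhds 0) ∧
    Tendsto (fun t =>
      (Matrix.toEuclideanLin (θhat t) (f (x t, u t)) - fstar (x t)) - H t)
      atTop (nhds 0) := by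
  classical
  have eqn : ∀ (A : Matrix (Fin d) (Fin d) ℝ) (v : EuclideanSpace ℝ (Fin d)),
      Matrix.toEuclideanCLM (𝕜 := ℝ) A v = Matrix.toEuclideanLin A v := fun _ _ => rfl
  set g : ℝ → EuclideanSpace ℝ (Fin d) := fun t => f (x t, u t) with hgdef
  have hgd : ∀ t, HasDerivAt g (fderiv ℝ f (x t, u t) (deriv x t, deriv u t)) t := by
    intro t
    exact ((hf.differentiable one_ne_zero) (x t, u t)).hasFDerivAt.comp_hasDerivAt t
      (HasDerivAt.prodMk ((hx t).hasDerivAt) ((hu t).hasDerivAt))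
  have hsplit : ∀ t, fderiv ℝ f (x t, u t) (deriv x t, deriv u t) =
      fderiv ℝ (fun y => f (y, u t)) (x t) (deriv x t)
        + fderiv ℝ (fun v => f (x t, v)) (u t) (deriv u t) := fun t =>
    adapt_fderiv_split f hf _ _ _ _
  have hθapp : ∀ t, HasDerivAt (fun s => Matrix.toEuclideanCLM (𝕜 := ℝ) θ (g s))
      (Matrix.toEuclideanCLM (𝕜 := ℝ) θ (fderiv ℝ f (x t, u t) (deriv x t, deriv u t))) t :=
    fun t => (Matrix.toEuclideanCLM (𝕜 := ℝ) θ).hasFDerivAt.comp_hasDerivAt t (hgd t)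
  have hfsx : ∀ t, HasDerivAt (fun s => fstar (x s)) (fderiv ℝ fstar (x t) (deriv x t)) t :=
    fun t => ((hfstar.differentiable one_ne_zero) (x t)).hasFDerivAt.comp_hasDerivAt t
      (hx t).hasDerivAt
  -- derivative of H
  have hHfun : H = fun s => Matrix.toEuclideanCLM (𝕜 := ℝ) θ (g s) - fstar (x s) :=
    funext fun s => by rw [hH s]; rfl
  have hHd : ∀ t, HasDerivAt H
      (Matrix.toEuclideanCLM (𝕜 := ℝ) θ (fderiv ℝ f (x t, u t) (deriv x t, deriv u t))
        - fderiv ℝ fstar (x t) (deriv x t)) t := by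
    intro t; rw [hHfun]; exact (hθapp t).sub (hfsx t)
  -- derivative of the CLM-valued curve and of `θ̂(t) g(t)`
  have happ : ∀ t, HasDerivAt (fun s => Matrix.toEuclideanCLM (𝕜 := ℝ) (θhat s) (g s))
      (Matrix.toEuclideanCLM (𝕜 := ℝ) (θhat' t) (g t)
        + Matrix.toEuclideanCLM (𝕜 := ℝ) (θhat t)
            (fderiv ℝ f (x t, u t) (deriv x t, deriv u t))) t :=
    fun t => (adapt_hasDerivAt_CLM θhat θhat' hθhat t).clm_apply (hgd t)
  -- `h̃` and its derivative: `h̃' = -K_θ h̃`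
  have hhtilfun : htil = fun s => Matrix.toEuclideanCLM (𝕜 := ℝ) θ (g s)
      - Matrix.toEuclideanCLM (𝕜 := ℝ) (θhat s) (g s) := by
    funext s
    rw [hhtil s, map_sub, LinearMap.sub_apply]
    rfl
  have hderivhtil : ∀ t, HasDerivAt htil (-(Matrix.toEuclideanLin Kθ (htil t))) t := by
    intro t
    have hd := (hθapp t).sub (happ t)
    rw [hhtilfun]
    refine hd.congr_deriv (Eq.symm ?_)
    have e1 : Matrix.toEuclideanCLM (𝕜 := ℝ) (θhat' t) (g t)
        = Matrix.toEuclideanLin (θhat' t) (g t) := rfl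
    rw [e1]
    rw [show Matrix.toEuclideanLin (θhat' t) (g t)
        = Matrix.toEuclideanLin (θhat' t) (f (x t, u t)) from rfl]
    rw [hadapt t, hhtilstar t, hJxhat t, hJuhat t, hxhatdot t, (hHd t).deriv, hsplit t,
      hhtil t]
    simp only [eqn, ContinuousLinearMap.sub_apply, ContinuousLinearMap.comp_apply,
      map_add, map_sub, ContinuousLinearMap.coe_sub', Pi.sub_apply, LinearMap.sub_apply]
    abel
  -- Lyapunov function
  set φ : ℝ → ℝ := fun r => Real.exp (2 * lam * r) * (inner ℝ (htil r) (htil r) : ℝ) with hφdef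
  have hexp : ∀ s, HasDerivAt (fun r => Real.exp (2 * lam * r))
      (Real.exp (2 * lam * s) * (2 * lam)) s := by
    intro s
    have h0 : HasDerivAt (fun r : ℝ => 2 * lam * r) (2 * lam) s := by
      simpa using (hasDerivAt_id s).const_mul (2 * lam)
    exact (Real.hasDerivAt_exp (2 * lam * s)).comp s h0
  have hinner : ∀ s, HasDerivAt (fun r => (inner ℝ (htil r) (htil r) : ℝ))
      ((inner ℝ (htil s) (-(Matrix.toEuclideanLin Kθ (htil s))) : ℝ)
        + (inner ℝ (-(Matrix.toEuclideanLin Kθ (htil s))) (htil s) : ℝ)) s :=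
    fun s => (hderivhtil s).inner ℝ (hderivhtil s)
  have hφd : ∀ s, HasDerivAt φ
      (Real.exp (2 * lam * s) * (2 * lam) * (inner ℝ (htil s) (htil s) : ℝ)
        + Real.exp (2 * lam * s) *
          ((inner ℝ (htil s) (-(Matrix.toEuclideanLin Kθ (htil s))) : ℝ)
            + (inner ℝ (-(Matrix.toEuclideanLin Kθ (htil s))) (htil s) : ℝ))) s :=
    fun s => (hexp s).mul (hinner s)
  have hφ' : ∀ s, deriv φ s ≤ 0 := by
    intro s
    rw [(hφd s).deriv]
    have hin := hKθ (htil s)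
    have h1 : (inner ℝ (htil s) (htil s) : ℝ) = ‖htil s‖ ^ 2 :=
      real_inner_self_eq_norm_sq _
    have h2 : (inner ℝ (htil s) (-(Matrix.toEuclideanLin Kθ (htil s))) : ℝ)
        = -(inner ℝ (htil s) (Matrix.toEuclideanLin Kθ (htil s)) : ℝ) := inner_neg_right _ _
    have h3 : (inner ℝ (-(Matrix.toEuclideanLin Kθ (htil s))) (htil s) : ℝ)
        = -(inner ℝ (htil s) (Matrix.toEuclideanLin Kθ (htil s)) : ℝ) := by
      rw [real_inner_comm]; exact inner_neg_right _ _
    rw [h1, h2, h3]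
    have hE := Real.exp_pos (2 * lam * s)
    nlinarith [hE, hin]
  have hanti : Antitone φ :=
    antitone_of_deriv_nonpos (fun s => (hφd s).differentiableAt) hφ'
  have key : ∀ t₀ t : ℝ, t₀ ≤ t → ‖htil t‖ ≤ Real.exp (-lam * (t - t₀)) * ‖htil t₀‖ := by
    intro t₀ t ht
    have h1 : φ t ≤ φ t₀ := hanti ht
    have hn : ∀ r, (inner ℝ (htil r) (htil r) : ℝ) = ‖htil r‖ ^ 2 := fun r =>
      real_inner_self_eq_norm_sq _
    rw [hφdef] at h1
    simp only [hn] at h1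
    have hE : Real.exp (-lam * (t - t₀)) ^ 2 * Real.exp (2 * lam * t)
        = Real.exp (2 * lam * t₀) := by
      rw [sq, ← Real.exp_add, ← Real.exp_add]; ring_nf
    have hsq : ‖htil t‖ ^ 2 ≤ (Real.exp (-lam * (t - t₀)) * ‖htil t₀‖) ^ 2 := by
      have hpos := Real.exp_pos (2 * lam * t)
      rw [mul_pow]
      nlinarith [h1, hE, hpos]
    exact (pow_le_pow_iff_left₀ (norm_nonneg _) (by positivity) two_ne_zero).mp hsq
  refine ⟨key, ?_, ?_⟩
  · have hb : ∀ᶠ t in atTop, ‖htil t‖ ≤ Real.exp (-(lam * t)) * ‖htil 0‖ := by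
      filter_upwards [eventually_ge_atTop (0 : ℝ)] with t ht
      have := key 0 t ht
      simpa [neg_mul] using this
    have hg0 : Tendsto (fun t => Real.exp (-(lam * t)) * ‖htil 0‖) atTop (nhds 0) := by
      have h2 : Tendsto (fun t : ℝ => Real.exp (-(lam * t))) atTop (nhds 0) :=
        Real.tendsto_exp_neg_atTop_nhds_zero.comp
          (Tendsto.const_mul_atTop hlam tendsto_id)
      simpa using h2.mul_const ‖htil 0‖
    exact squeeze_zero_norm' hb hg0
  · have hfun : (fun t =>
        (Matrix.toEuclideanLin (θhat t) (f (x t, u t)) - fstar (x t)) - H t)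
        = fun t => -(htil t) := by
      funext t
      rw [hhtil t, hH t, map_sub, LinearMap.sub_apply]
      abel
    rw [hfun]
    have hb : ∀ᶠ t in atTop, ‖htil t‖ ≤ Real.exp (-(lam * t)) * ‖htil 0‖ := by
      filter_upwards [eventually_ge_atTop (0 : ℝ)] with t ht
      simpa [neg_mul] using key 0 t ht
    have hg0 : Tendsto (fun t => Real.exp (-(lam * t)) * ‖htil 0‖) atTop (nhds 0) := by
      have h2 : Tendsto (fun t : ℝ => Real.exp (-(lam * t))) atTop (nhds 0) :=
        Real.tendsto_exp_neg_atTop_nhds_zero.comp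
          (Tendsto.const_mul_atTop hlam tendsto_id)
      simpa using h2.mul_const ‖htil 0‖
    simpa using (squeeze_zero_norm' hb hg0).neg
end

section
/- Let K_f, K_h, K_θ, M : ℝ → M_d(ℝ) be matrix-valued functions and suppose there exists ε > 0 such that for every t ∈ ℝ and all z₁, z₂, z₃ ∈ ℝ^d one has ⟨z₁, z₂⟩ − ⟨z₁, K_f(t) z₁⟩ − ⟨z₂, M(t) K_θ(t) z₃⟩ − ⟨z₂, K_h(t) z₂⟩ − ⟨z₃, K_θ(t) z₃⟩ ≤ −ε(‖z₁‖² + ‖z₂‖² + ‖z₃‖²). Let x, H, h̃ : ℝ → ℝ^d be differentiable curves satisfying, for every t ∈ ℝ, x'(t) = H(t) − K_f(t) x(t), h̃'(t) = −K_θ(t) h̃(t), and H'(t) = M(t) h̃'(t) − K_h(t) H(t). Then for all t₀ ≤ t one has ‖x(t)‖² + ‖H(t)‖² + ‖h̃(t)‖² ≤ exp(−2ε(t − t₀)) (‖x(t₀)‖² + ‖H(t₀)‖² + ‖h̃(t₀)‖²); in particular x(t), H(t) and h̃(t) all tend to 0 as t → ∞. -/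
open Filter

/-- **Proposition 2 (stability of the adaptive expanded system).** If the quadratic form
of the block matrix `K̄` of Eq. (36) is uniformly negative definite with margin `ε`, then
along `ẋ = H − K_f x`, `h̃' = −K_θ h̃`, `H' = M h̃' − K_h H` one has
`‖x(t)‖² + ‖H(t)‖² + ‖h̃(t)‖² ≤ e^{−2ε(t−t₀)}(‖x(t₀)‖² + ‖H(t₀)‖² + ‖h̃(t₀)‖²)`, and in
particular `x`, `H` and `h̃` all tend to `0` as `t → ∞`. -/
theorem adaptive_expanded_system_stability_proposition2
    (d : ℕ) (hd : 0 < d)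
    (Kf Kh Kθ M : ℝ → Matrix (Fin d) (Fin d) ℝ)
    (eps : ℝ) (heps : 0 < eps)
    (hK : ∀ (t : ℝ) (z₁ z₂ z₃ : EuclideanSpace ℝ (Fin d)),
      (inner ℝ z₁ z₂ : ℝ)
        - (inner ℝ z₁ (Matrix.toEuclideanLin (Kf t) z₁) : ℝ)
        - (inner ℝ z₂ (Matrix.toEuclideanLin (M t)
            (Matrix.toEuclideanLin (Kθ t) z₃)) : ℝ)
        - (inner ℝ z₂ (Matrix.toEuclideanLin (Kh t) z₂) : ℝ)
        - (inner ℝ z₃ (Matrix.toEuclideanLin (Kθ t) z₃) : ℝ)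
      ≤ -eps * (‖z₁‖ ^ 2 + ‖z₂‖ ^ 2 + ‖z₃‖ ^ 2))
    (x H htil : ℝ → EuclideanSpace ℝ (Fin d))
    (hx : Differentiable ℝ x) (hH : Differentiable ℝ H) (hhtil : Differentiable ℝ htil)
    (hxdyn : ∀ t, deriv x t = H t - Matrix.toEuclideanLin (Kf t) (x t))
    (hhtildyn : ∀ t, deriv htil t = -(Matrix.toEuclideanLin (Kθ t) (htil t)))
    (hHdyn : ∀ t, deriv H t =
      Matrix.toEuclideanLin (M t) (deriv htil t)
        - Matrix.toEuclideanLin (Kh t) (H t)) :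
    (∀ t₀ t : ℝ, t₀ ≤ t →
      ‖x t‖ ^ 2 + ‖H t‖ ^ 2 + ‖htil t‖ ^ 2 ≤
        Real.exp (-(2 * eps) * (t - t₀)) * (‖x t₀‖ ^ 2 + ‖H t₀‖ ^ 2 + ‖htil t₀‖ ^ 2)) ∧
    Tendsto x atTop (nhds 0) ∧ Tendsto H atTop (nhds 0) ∧
    Tendsto htil atTop (nhds 0) := by
  set V : ℝ → ℝ := fun t =>
    (inner ℝ (x t) (x t) : ℝ) + (inner ℝ (H t) (H t) : ℝ) + (inner ℝ (htil t) (htil t) : ℝ)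
    with hVdef
  have hVeq : ∀ t, V t = ‖x t‖ ^ 2 + ‖H t‖ ^ 2 + ‖htil t‖ ^ 2 := by
    intro t
    simp only [hVdef]
    rw [real_inner_self_eq_norm_sq, real_inner_self_eq_norm_sq, real_inner_self_eq_norm_sq]
  have hVnonneg : ∀ t, 0 ≤ V t := by
    intro t; rw [hVeq]; positivity
  -- derivative of V
  have hVderiv : ∀ t, HasDerivAt V
      (2 * (inner ℝ (x t) (deriv x t) : ℝ) + 2 * (inner ℝ (H t) (deriv H t) : ℝ)
        + 2 * (inner ℝ (htil t) (deriv htil t) : ℝ)) t := by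
    intro t
    have h1 := ((hx t).hasDerivAt.inner ℝ (hx t).hasDerivAt)
    have h2 := ((hH t).hasDerivAt.inner ℝ (hH t).hasDerivAt)
    have h3 := ((hhtil t).hasDerivAt.inner ℝ (hhtil t).hasDerivAt)
    have := (h1.add h2).add h3
    refine this.congr_deriv ?_
    rw [real_inner_comm (deriv x t) (x t), real_inner_comm (deriv H t) (H t),
      real_inner_comm (deriv htil t) (htil t)]
    ring
  -- the derivative bound
  have hderle : ∀ t,
      2 * (inner ℝ (x t) (deriv x t) : ℝ) + 2 * (inner ℝ (H t) (deriv H t) : ℝ)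
        + 2 * (inner ℝ (htil t) (deriv htil t) : ℝ) ≤ -(2 * eps) * V t := by
    intro t
    have hk := hK t (x t) (H t) (htil t)
    rw [hxdyn, hhtildyn, hHdyn, hhtildyn]
    simp only [map_neg, inner_sub_right, inner_neg_right]
    rw [hVeq]
    nlinarith [hk]
  -- the exponentially weighted function is antitone
  set g : ℝ → ℝ := fun t => V t * Real.exp (2 * eps * t) with hgdef
  have hgderiv : ∀ t, HasDerivAt g
      ((2 * (inner ℝ (x t) (deriv x t) : ℝ) + 2 * (inner ℝ (H t) (deriv H t) : ℝ)
        + 2 * (inner ℝ (htil t) (deriv htil t) : ℝ)) * Real.exp (2 * eps * t)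
        + V t * (Real.exp (2 * eps * t) * (2 * eps))) t := by
    intro t
    have := (hVderiv t).mul (((hasDerivAt_id t).const_mul (2 * eps)).exp)
    simp at this
    exact this
  have hganti : Antitone g := by
    apply antitone_of_deriv_nonpos
    · intro t; exact (hgderiv t).differentiableAt
    · intro t
      rw [(hgderiv t).deriv]
      have h1 := hderle t
      have h2 : (0:ℝ) < Real.exp (2 * eps * t) := Real.exp_pos _
      nlinarith
  have hmain : ∀ t₀ t : ℝ, t₀ ≤ t → V t ≤ Real.exp (-(2 * eps) * (t - t₀)) * V t₀ := by
    intro t₀ t ht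
    have hg := hganti ht
    have h2 : (0:ℝ) < Real.exp (2 * eps * t) := Real.exp_pos _
    rw [hgdef] at hg
    simp only at hg
    have := mul_le_mul_of_nonneg_right hg (le_of_lt (Real.exp_pos (-(2 * eps * t))))
    calc V t = V t * Real.exp (2 * eps * t) * Real.exp (-(2 * eps * t)) := by
          rw [mul_assoc, ← Real.exp_add]; simp
      _ ≤ V t₀ * Real.exp (2 * eps * t₀) * Real.exp (-(2 * eps * t)) := this
      _ = Real.exp (-(2 * eps) * (t - t₀)) * V t₀ := by
          rw [mul_assoc, ← Real.exp_add]; ring_nf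
  have hVtend : Tendsto V atTop (nhds 0) := by
    have hexp : Tendsto (fun t : ℝ => Real.exp (-(2 * eps) * (t - 0)) * V 0) atTop (nhds 0) := by
      have h1 : Tendsto (fun t : ℝ => -(2 * eps) * (t - 0)) atTop atBot := by
        apply Tendsto.const_mul_atTop_of_neg (by linarith : -(2*eps) < 0)
        exact tendsto_atTop_add_const_right _ _ tendsto_id
      have := (Real.tendsto_exp_atBot.comp h1).mul_const (V 0)
      simpa using this
    apply squeeze_zero' (Eventually.of_forall hVnonneg) _ hexp
    filter_upwards [eventually_ge_atTop (0:ℝ)] with t ht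
    exact hmain 0 t ht
  have norm_tend : ∀ (f : ℝ → EuclideanSpace ℝ (Fin d)),
      (∀ t, ‖f t‖ ^ 2 ≤ V t) → Tendsto f atTop (nhds 0) := by
    intro f hf
    rw [tendsto_zero_iff_norm_tendsto_zero]
    have hsq : Tendsto (fun t => ‖f t‖ ^ 2) atTop (nhds 0) := by
      apply squeeze_zero (fun t => by positivity) hf hVtend
    have h2 := (Real.continuous_sqrt.tendsto 0).comp hsq
    simp only [Function.comp_def, Real.sqrt_zero] at h2
    have h3 : (fun t => ‖f t‖) = fun t => Real.sqrt (‖f t‖ ^ 2) :=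
      funext fun t => by rw [Real.sqrt_sq (norm_nonneg _)]
    rw [h3]
    exact h2
  refine ⟨fun t₀ t ht => by simpa [hVeq] using hmain t₀ t ht, ?_, ?_, ?_⟩
  · exact norm_tend x (fun t => by rw [hVeq]; nlinarith [sq_nonneg ‖H t‖, sq_nonneg ‖htil t‖])
  · exact norm_tend H (fun t => by rw [hVeq]; nlinarith [sq_nonneg ‖x t‖, sq_nonneg ‖htil t‖])
  · exact norm_tend htil (fun t => by rw [hVeq]; nlinarith [sq_nonneg ‖x t‖, sq_nonneg ‖H t‖])
end

section
/- Let s : ℝ → ℝ be the sigmoid function s(r) = 1/(1 + e^{−r}), and fix real constants θ, β, d_min and σ with σ ≠ 0. The map g : ℝ² → ℝ² defined by g(d) = θ · e^{−‖d‖²/σ²} · (1 − β s(−‖d‖ + d_min)) · d is continuously differentiable on all of ℝ² (including at d = 0), and its Fréchet derivative at d = 0 is θ (1 − β s(d_min)) times the identity map. -/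
open Real Asymptotics ContinuousLinearMap Filter Topology

section aux
variable {E : Type*} [NormedAddCommGroup E] [InnerProductSpace ℝ E]

/-- derivative of the norm at a nonzero point of a real inner product space. -/
theorem my_hasFDerivAt_norm {x : E} (hx : x ≠ 0) :
    HasFDerivAt (fun y : E => ‖y‖) (‖x‖⁻¹ • innerSL ℝ x) x := by
  have hxn : ‖x‖ ≠ 0 := norm_ne_zero_iff.mpr hx
  have h1 : HasFDerivAt (fun y : E => ‖y‖ ^ 2) (2 • innerSL ℝ x) x :=
    (hasStrictFDerivAt_norm_sq x).hasFDerivAt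
  have h2 : HasDerivAt Real.sqrt (1 / (2 * Real.sqrt (‖x‖ ^ 2))) (‖x‖ ^ 2) :=
    Real.hasDerivAt_sqrt (pow_ne_zero 2 hxn)
  have h3 := h2.comp_hasFDerivAt x h1
  convert h3 using 1
  · rfl
  · rfl
  · funext y
    simp [Function.comp, Real.sqrt_sq (norm_nonneg y)]
  · ext y
    simp only [ContinuousLinearMap.smul_apply]
    rw [Real.sqrt_sq (norm_nonneg x)]
    simp only [smul_eq_mul, ContinuousLinearMap.smul_apply, smul_eq_mul]
    field_simp
    ring

set_option maxHeartbeats 1000000 in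
set_option synthInstance.maxHeartbeats 400000 in
/-- The core C¹ result in an abstract real inner product space:
if `c : ℝ → ℝ` is smooth, then `v ↦ c ‖v‖ • v` is `C¹` and its derivative at `0`
is `c 0` times the identity. -/
theorem radial_smul_contDiff_one (c : ℝ → ℝ) (hc : ContDiff ℝ (⊤ : ℕ∞) c) :
    ContDiff ℝ 1 (fun v : E => c ‖v‖ • v) ∧
    fderiv ℝ (fun v : E => c ‖v‖ • v) 0 = c 0 • ContinuousLinearMap.id ℝ E := by
  have hc' : Continuous (deriv c) := hc.continuous_deriv (mod_cast le_top)
  have hccont : Continuous c := hc.continuous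
  set D : E → (E →L[ℝ] E) := fun x =>
    c ‖x‖ • ContinuousLinearMap.id ℝ E +
      ((deriv c ‖x‖ * ‖x‖⁻¹) • innerSL ℝ x).smulRight x with hD_def
  have hD0 : D 0 = c 0 • ContinuousLinearMap.id ℝ E := by
    rw [hD_def]
    ext y
    simp
  -- derivative at every point
  have key : ∀ x : E, HasFDerivAt (fun v : E => c ‖v‖ • v) (D x) x := by
    intro x
    rcases eq_or_ne x 0 with rfl | hx
    · rw [hD0, hasFDerivAt_iff_isLittleO_nhds_zero]
      have h1 : (fun h : E => c ‖h‖ - c 0) =o[𝓝 0] (fun _ : E => (1 : ℝ)) := by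
        rw [isLittleO_one_iff]
        have ht : Tendsto (fun h : E => c ‖h‖) (𝓝 0) (𝓝 (c ‖(0 : E)‖)) :=
          ((hccont.comp continuous_norm).tendsto 0)
        simpa using ht.sub_const (c 0)
      have h2 : (fun h : E => h) =O[𝓝 (0 : E)] (fun h : E => h) := isBigO_refl _ _
      have h3 := h1.smul_isBigO h2
      simp only [one_smul] at h3
      refine h3.congr' ?_ EventuallyEq.rfl
      filter_upwards with h
      simp [sub_smul]
    · have hn := my_hasFDerivAt_norm hx
      have hcd : HasDerivAt c (deriv c ‖x‖) ‖x‖ :=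
        ((hc.differentiable (by simp)) ‖x‖).hasDerivAt
      have hcomp : HasFDerivAt (fun y : E => c ‖y‖)
          (deriv c ‖x‖ • (‖x‖⁻¹ • innerSL ℝ x)) x := hcd.comp_hasFDerivAt x hn
      have hmain := hcomp.smul (hasFDerivAt_id x)
      simp only [smul_smul] at hmain
      exact hmain
  -- continuity of the derivative
  have hDcont : Continuous D := by
    rw [continuous_iff_continuousAt]
    intro x
    rcases eq_or_ne x 0 with rfl | hx
    · rw [ContinuousAt, hD0, tendsto_iff_norm_sub_tendsto_zero]
      have hb : Continuous (fun x : E => |c ‖x‖ - c 0| + |deriv c ‖x‖| * ‖x‖) :=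
        (((hccont.comp continuous_norm).sub continuous_const).abs).add
          (((hc'.comp continuous_norm).abs).mul continuous_norm)
      refine squeeze_zero (g := fun x : E => |c ‖x‖ - c 0| + |deriv c ‖x‖| * ‖x‖)
        (fun x => norm_nonneg _) (fun x => ?_) ?_
      · have heq : D x - c 0 • ContinuousLinearMap.id ℝ E =
            (c ‖x‖ - c 0) • ContinuousLinearMap.id ℝ E +
              ((deriv c ‖x‖ * ‖x‖⁻¹) • innerSL ℝ x).smulRight x := by
          rw [hD_def]
          ext y
          simp [sub_smul]
          abel
        rw [heq]
        refine (norm_add_le _ _).trans (add_le_add ?_ ?_)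
        · calc ‖(c ‖x‖ - c 0) • ContinuousLinearMap.id ℝ E‖
              ≤ ‖c ‖x‖ - c 0‖ * ‖ContinuousLinearMap.id ℝ E‖ :=
                ContinuousLinearMap.opNorm_smul_le _ _
            _ ≤ |c ‖x‖ - c 0| * 1 := by
                rw [Real.norm_eq_abs]
                exact mul_le_mul_of_nonneg_left norm_id_le (abs_nonneg _)
            _ = |c ‖x‖ - c 0| := mul_one _
        · rcases eq_or_ne x 0 with rfl | hx0
          · simp
          · have hxn : ‖x‖ ≠ 0 := norm_ne_zero_iff.mpr hx0
            calc ‖((deriv c ‖x‖ * ‖x‖⁻¹) • innerSL ℝ x).smulRight x‖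
                ≤ ‖(deriv c ‖x‖ * ‖x‖⁻¹) • innerSL ℝ x‖ * ‖x‖ :=
                  (ContinuousLinearMap.norm_smulRight_apply _ _).le
              _ ≤ (‖deriv c ‖x‖ * ‖x‖⁻¹‖ * ‖innerSL ℝ x‖) * ‖x‖ :=
                  mul_le_mul_of_nonneg_right
                    (ContinuousLinearMap.opNorm_smul_le _ _) (norm_nonneg _)
              _ = |deriv c ‖x‖| * ‖x‖ := by
                  rw [innerSL_apply_norm, Real.norm_eq_abs, abs_mul, abs_inv, abs_norm]
                  field_simp
      · have := hb.tendsto 0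
        simpa using this
    · have hxn : ‖x‖ ≠ 0 := norm_ne_zero_iff.mpr hx
      refine ContinuousAt.add ?_ ?_
      · exact ((hccont.comp continuous_norm).continuousAt).smul continuousAt_const
      · have hbil : Continuous (fun p : (E →L[ℝ] ℝ) × E => p.1.smulRight p.2) :=
          isBoundedBilinearMap_smulRight.continuous
        have ha : ContinuousAt (fun x : E => deriv c ‖x‖ * ‖x‖⁻¹) x :=
          ((hc'.comp continuous_norm).continuousAt).mul
            (continuous_norm.continuousAt.inv₀ hxn)
        have hinner : Continuous (fun x : E => innerSL ℝ x) := (innerSL ℝ).continuous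
        exact hbil.continuousAt.comp ((ha.smul hinner.continuousAt).prodMk continuousAt_id)
  have hdiff : Differentiable ℝ (fun v : E => c ‖v‖ • v) := fun x => (key x).differentiableAt
  have hfd : fderiv ℝ (fun v : E => c ‖v‖ • v) = D := funext fun x => (key x).fderiv
  constructor
  · rw [contDiff_one_iff_fderiv]
    exact ⟨hdiff, hfd ▸ hDcont⟩
  · rw [hfd, hD0]

end aux

/-- **C¹-smoothness of a single herder's contribution to the Exponential Model (Eq. (3)).**
With the sigmoid `s(r) = 1/(1 + e^{−r})`, the map
`g(d) = θ e^{−‖d‖²/σ²} (1 − β s(−‖d‖ + d_min)) d` is continuously differentiable on all of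
`ℝ²` (including at `d = 0`), and its Fréchet derivative at `0` is
`θ (1 − β s(d_min))` times the identity. -/
theorem exponential_model_single_herder_C1
    (s : ℝ → ℝ) (hs : ∀ r, s r = 1 / (1 + Real.exp (-r)))
    (θ β dmin σ : ℝ) (hσ : σ ≠ 0)
    (g : EuclideanSpace ℝ (Fin 2) → EuclideanSpace ℝ (Fin 2))
    (hg : ∀ v, g v =
      (θ * Real.exp (-‖v‖ ^ 2 / σ ^ 2) * (1 - β * s (-‖v‖ + dmin))) • v) :
    ContDiff ℝ 1 g ∧
    fderiv ℝ g 0 =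
      (θ * (1 - β * s dmin)) • ContinuousLinearMap.id ℝ (EuclideanSpace ℝ (Fin 2)) := by
  set c : ℝ → ℝ := fun r => θ * Real.exp (-r ^ 2 / σ ^ 2) * (1 - β * s (-r + dmin)) with hc_def
  have hgfun : g = fun v : EuclideanSpace ℝ (Fin 2) => c ‖v‖ • v := by
    funext v
    rw [hg v]
  have hc : ContDiff ℝ (⊤ : ℕ∞) c := by
    have hceq : c = fun r => θ * Real.exp (-r ^ 2 / σ ^ 2) *
        (1 - β * (1 / (1 + Real.exp (-(-r + dmin))))) := by
      funext r
      simp only [hc_def]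
      rw [hs]
    rw [hceq]
    refine (contDiff_const.mul ?_).mul (contDiff_const.sub (contDiff_const.mul ?_))
    · exact ((contDiff_id.pow 2).neg.div_const _).exp
    · refine contDiff_const.div (contDiff_const.add ((contDiff_id.neg.add contDiff_const).neg.exp))
        (fun r => ?_)
      positivity
  obtain ⟨h1, h2⟩ := radial_smul_contDiff_one (E := EuclideanSpace ℝ (Fin 2)) c hc
  rw [hgfun]
  refine ⟨h1, ?_⟩
  rw [h2]
  congr 1
  simp only [hc_def]
  norm_num
end
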